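/- arXiv:1210.3922 — 2 statements merged into one kernel-verified Lean document; each statement's English description precedes it below -/
import Mathlib

section
/- Let R be a fusion ring with basis B and fusion subsets S, T with double-coset classes Λ₁,…,Λ_l and A_i = Σ_{X∈Λ_i} FPdim(X)·X. The eigenspace of the operator x ↦ R_S·x·R_T on R ⊗ ℝ corresponding to the eigenvalue FPdim(S)·FPdim(T) has the family (A_i)_{1≤i≤l} as a basis, and FPdim(S)·FPdim(T) is the largest eigenvalue of this operator. -/
open Finset

/-- A fusion ring with distinguished basis indexed by `ι`: nonnegative integer structure
constants `N`, unit basis element `one`, involution `star`, and the Frobenius–Perron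
dimension `fp`, the (unique) ring homomorphism to `ℝ` positive on the basis. -/
structure FusionRing (ι : Type) [Fintype ι] [DecidableEq ι] where
  N : ι → ι → ι → ℕ
  one : ι
  star : ι → ι
  assoc : ∀ a b c d, ∑ x, N a b x * N x c d = ∑ x, N b c x * N a x d
  one_mul : ∀ a b, N one a b = if a = b then 1 else 0
  mul_one : ∀ a b, N a one b = if a = b then 1 else 0
  star_invol : ∀ a, star (star a) = a
  N_one : ∀ a b, N a b one = if b = star a then 1 else 0
  N_star : ∀ a b c, N a b c = N (star b) (star a) (star c)
  fp : ι → ℝ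
  fp_pos : ∀ a, 0 < fp a
  fp_one : fp one = 1
  fp_hom : ∀ a b, fp a * fp b = ∑ c, (N a b c : ℝ) * fp c

namespace FusionRing

variable {ι : Type} [Fintype ι] [DecidableEq ι] (R : FusionRing ι)

set_option linter.unusedVariables false
open scoped Classical

/-- Multiplication of `R ⊗ ℝ`, written on coefficient vectors in the basis `ι`. -/
noncomputable def mul (x y : ι → ℝ) : ι → ℝ :=
  fun c => ∑ a, ∑ b, x a * y b * (R.N a b c : ℝ)

/-- The basis element `a` viewed as a coefficient vector. -/
def e (R : FusionRing ι) (a : ι) : ι → ℝ := fun c => if c = a then 1 else 0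

/-- The linear extension of the involution `*`. -/
def starVec (x : ι → ℝ) : ι → ℝ := fun c => x (R.star c)

/-- The standard bilinear form, `m(a,b) = δ_{a,b}` on basis elements. -/
def m (R : FusionRing ι) (x y : ι → ℝ) : ℝ := ∑ a, x a * y a

/-- `S` is the basis of a fusion subring: contains the unit, closed under `*`, and closed
under taking constituents of products. -/
def IsFusionSubset (S : Finset ι) : Prop :=
  R.one ∈ S ∧ (∀ a ∈ S, R.star a ∈ S) ∧ ∀ a ∈ S, ∀ b ∈ S, ∀ c, 0 < R.N a b c → c ∈ S

/-- The regular element `R_S = ∑_{d ∈ S} FPdim(d)·d` of a fusion subset `S`. -/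
def reg (S : Finset ι) : ι → ℝ := fun c => if c ∈ S then R.fp c else 0

/-- `FPdim(S) = ∑_{d ∈ S} FPdim(d)²`. -/
def fpdimS (S : Finset ι) : ℝ := ∑ d ∈ S, R.fp d ^ 2

/-- The double coset relation relative to fusion subsets `S`, `T`:
`X ∼ Y` iff `Y` occurs with positive multiplicity in `D·X·E` for some `D ∈ S`, `E ∈ T`. -/
def dcRel (S T : Finset ι) (X Y : ι) : Prop :=
  ∃ D ∈ S, ∃ E ∈ T, 0 < ∑ a, R.N D X a * R.N a E Y

/-- `A_i = ∑_{Y ∈ Λ_i} FPdim(Y)·Y` where `Λ_i` is the double coset of `X`. -/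
noncomputable def classVec (S T : Finset ι) (X : ι) : ι → ℝ :=
  fun c => if R.dcRel S T X c then R.fp c else 0

end FusionRing

/-!
Write the operator `x ↦ R_S·x·R_T` as a matrix `M` in the basis. Its entries are nonnegative,
`M c X > 0` exactly when `X ∼ c`, and Frobenius reciprocity makes `FPdim` a positive eigenvector
with eigenvalue `λ = FPdim(S)·FPdim(T)`. Comparing an eigenvector `x` with `FPdim` at a basis
element where `|x| / FPdim` is largest gives `|μ| ≤ λ`. For `μ = λ` the same comparison, made at
the maximum of `x / FPdim` over a double coset, forces `x / FPdim` to be constant on every double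
coset; conversely `M` respects the double cosets, so each `A_i` is an eigenvector. Hence the
`λ`-eigenspace is exactly the span of the `A_i`, which have disjoint supports.
-/

namespace Matrix

variable {ι : Type*} [Fintype ι] {M : Matrix ι ι ℝ} {v x : ι → ℝ} {ρ μ : ℝ}

lemma mul_apply_pos_iff {A B : Matrix ι ι ℝ} (hA : ∀ i j, 0 ≤ A i j) (hB : ∀ i j, 0 ≤ B i j)
    {i j : ι} : 0 < (A * B) i j ↔ ∃ k, 0 < A i k ∧ 0 < B k j := by
  simp [mul_apply, sum_pos_iff_of_nonneg fun k _ => mul_nonneg (hA i k) (hB k j), mul_pos_iff,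
    (hA _ _).not_gt]

lemma mulVec_eq_smul_iff : M *ᵥ x = μ • x ↔ ∀ c, ∑ Z, M c Z * x Z = μ * x c := by
  simp [funext_iff, mulVec, dotProduct]

lemma abs_le_of_mulVec_eq_smul (hM : ∀ c Z, 0 ≤ M c Z) (hv : ∀ i, 0 < v i)
    (hMv : M *ᵥ v = ρ • v) (hx : x ≠ 0) (hMx : M *ᵥ x = μ • x) : |μ| ≤ ρ := by
  obtain ⟨c, -, hc⟩ := exists_max_image univ (fun Z => |x Z| / v Z)
    (univ_nonempty_iff.mpr (Function.ne_iff.mp hx).nonempty)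
  set t := |x c| / v c
  have hxt : ∀ Z, |x Z| ≤ t * v Z := fun Z =>
    (div_le_iff₀ (hv Z)).mp (hc Z (mem_univ Z))
  have hxc : 0 < |x c| := by
    obtain ⟨Z, hZ⟩ := Function.ne_iff.mp hx
    have := (abs_pos.mpr hZ).trans_le (hxt Z)
    exact (div_pos_iff_of_pos_right (hv c)).mp (pos_of_mul_pos_left this (hv Z).le)
  refine le_of_mul_le_mul_right ?_ hxc
  calc |μ| * |x c| = |∑ Z, M c Z * x Z| := by
        rw [← abs_mul, mulVec_eq_smul_iff.mp hMx c]
    _ ≤ ∑ Z, M c Z * (t * v Z) := by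
        refine (abs_sum_le_sum_abs _ _).trans (sum_le_sum fun Z _ => ?_)
        rw [abs_mul, abs_of_nonneg (hM c Z)]
        exact mul_le_mul_of_nonneg_left (hxt Z) (hM c Z)
    _ = ρ * |x c| := by
        simp_rw [mul_left_comm _ t, ← mul_sum, mulVec_eq_smul_iff.mp hMv c, t]
        field_simp [(hv c).ne']

lemma div_eq_of_forall_div_le (hM : ∀ c Z, 0 ≤ M c Z) (hv : ∀ i, 0 < v i)
    (hMv : M *ᵥ v = ρ • v) (hMx : M *ᵥ x = ρ • x) {c : ι}
    (hc : ∀ Z, 0 < M c Z → x Z / v Z ≤ x c / v c) {Z : ι} (hZ : 0 < M c Z) :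
    x Z / v Z = x c / v c := by
  set t := x c / v c
  have hsum : ∑ Y, M c Y * (t * v Y - x Y) = 0 := by
    simp_rw [mul_sub, sum_sub_distrib, mul_left_comm _ t, ← mul_sum,
      mulVec_eq_smul_iff.mp hMv c, mulVec_eq_smul_iff.mp hMx c, t]
    field_simp [(hv c).ne']
    ring
  have hterm : ∀ Y, 0 ≤ M c Y * (t * v Y - x Y) := by
    intro Y
    rcases (hM c Y).eq_or_lt with hY | hY
    · rw [← hY, zero_mul]
    · exact mul_nonneg hY.le (sub_nonneg.mpr ((div_le_iff₀ (hv Y)).mp (hc Y hY)))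
  have hZt : t * v Z = x Z := by
    have := congrFun ((Fintype.sum_eq_zero_iff_of_nonneg hterm).mp hsum) Z
    simpa [hZ.ne', sub_eq_zero] using this
  rw [← hZt, mul_div_assoc, div_self (hv Z).ne', mul_one]

lemma mulVec_indicator_eq_smul (hMv : M *ᵥ v = ρ • v) {K : Set ι}
    (hK : ∀ c Z, M c Z ≠ 0 → (Z ∈ K ↔ c ∈ K)) : M *ᵥ K.indicator v = ρ • K.indicator v := by
  refine mulVec_eq_smul_iff.mpr fun c => ?_
  have hterm : ∀ Z, M c Z * K.indicator v Z = K.indicator (fun _ => M c Z * v Z) c := by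
    intro Z
    by_cases hMcZ : M c Z = 0
    · simp [hMcZ]
    · classical
      simp only [Set.indicator_apply, hK c Z hMcZ]
      split_ifs <;> simp
  by_cases hc : c ∈ K
  · simp only [hterm, Set.indicator_of_mem hc, mulVec_eq_smul_iff.mp hMv c]
  · simp [hterm, Set.indicator_of_notMem hc]

lemma div_eq_div_of_mulVec_eq_smul {r : ι → ι → Prop} (hr : Equivalence r)
    (hM : ∀ c Z, 0 ≤ M c Z) (hMr : ∀ c Z, 0 < M c Z ↔ r Z c) (hv : ∀ i, 0 < v i)
    (hMv : M *ᵥ v = ρ • v) (hMx : M *ᵥ x = ρ • x) {X Y : ι} (hXY : r X Y) :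
    x Y / v Y = x X / v X := by
  classical
  obtain ⟨c, hc, hmax⟩ := exists_max_image (univ.filter (r X)) (fun Z => x Z / v Z)
    ⟨X, by simp [hr.refl]⟩
  have hXc : r X c := (mem_filter.mp hc).2
  have hclass : ∀ Z, r X Z → x Z / v Z = x c / v c := fun Z hXZ =>
    div_eq_of_forall_div_le hM hv hMv hMx
      (fun W hW => hmax W (by simpa using hr.trans hXc (hr.symm ((hMr c W).mp hW))))
      ((hMr c Z).mpr (hr.trans (hr.symm hXZ) hXc))
  rw [hclass Y hXY, hclass X (hr.refl X)]

end Matrix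

lemma Equivalence.exists_transversal {ι : Type*} [Fintype ι] {r : ι → ι → Prop}
    (hr : Equivalence r) : ∃ Reps : Finset ι, ∀ X, ∃! Y, Y ∈ Reps ∧ r X Y := by
  classical
  let s : Setoid ι := ⟨r, hr⟩
  refine ⟨univ.image fun X => (Quotient.mk s X).out, fun X => ⟨(Quotient.mk s X).out,
    ⟨mem_image_of_mem _ (mem_univ X), hr.symm (Quotient.mk_out (s := s) X)⟩, ?_⟩⟩
  rintro _ ⟨hY, hXY⟩
  obtain ⟨Z, -, rfl⟩ := mem_image.mp hY
  have hZX : Quotient.mk s Z = Quotient.mk s X :=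
    Quotient.sound (hr.symm (hr.trans hXY (Quotient.mk_out (s := s) Z)))
  rw [hZX]

section Transversal

variable {ι K : Type*} [Field K] {r : ι → ι → Prop} {Reps : Finset ι}
  {v : ι → K}

lemma linearIndependent_indicator_of_transversal (hr : Equivalence r)
    (hReps : ∀ X, ∃! Y, Y ∈ Reps ∧ r X Y) (hv : ∀ i, v i ≠ 0) :
    LinearIndependent K (fun Y : Reps => {c | r Y c}.indicator v) := by
  classical
  refine Fintype.linearIndependent_iff.mpr fun g hg Y => ?_
  have hgY := congrFun hg Y
  rw [Finset.sum_apply, Finset.sum_eq_single Y] at hgY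
  · simpa [Set.indicator_of_mem (show (Y : ι) ∈ {c | r Y c} from hr.refl Y), hv] using hgY
  · intro Z _ hZY
    have hZY' : ¬ r Z Y := fun h =>
      hZY (Subtype.ext ((hReps Z).unique ⟨Z.2, hr.refl Z⟩ ⟨Y.2, h⟩))
    simp [Set.indicator_of_notMem (show (Y : ι) ∉ {c | r Z c} from hZY')]
  · simp

lemma eq_sum_smul_indicator_of_transversal (hr : Equivalence r)
    (hReps : ∀ X, ∃! Y, Y ∈ Reps ∧ r X Y) (hv : ∀ i, v i ≠ 0) {x : ι → K}
    (hx : ∀ X Y, r X Y → x Y / v Y = x X / v X) :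
    x = ∑ Y ∈ Reps, (x Y / v Y) • {c | r Y c}.indicator v := by
  classical
  funext c
  obtain ⟨Y, ⟨hY, hcY⟩, huniq⟩ := hReps c
  rw [Finset.sum_apply, Finset.sum_eq_single Y]
  · rw [Pi.smul_apply, Set.indicator_of_mem (show c ∈ {c | r Y c} from hr.symm hcY),
      hx c Y hcY, smul_eq_mul, div_mul_cancel₀ _ (hv c)]
  · intro Z hZ hZY
    have hZc : ¬ r Z c := fun h => hZY (huniq Z ⟨hZ, hr.symm h⟩)
    simp [Set.indicator_of_notMem (show c ∉ {c | r Z c} from hZc)]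
  · exact fun h => (h hY).elim

end Transversal

namespace Matrix

variable {ι : Type*} [Fintype ι] {M : Matrix ι ι ℝ} {v : ι → ℝ} {ρ : ℝ}

theorem exists_transversal_span_indicator_eq_eigenspace {r : ι → ι → Prop}
    (hr : Equivalence r) (hM : ∀ c Z, 0 ≤ M c Z) (hMr : ∀ c Z, 0 < M c Z ↔ r Z c)
    (hv : ∀ i, 0 < v i) (hMv : M *ᵥ v = ρ • v) :
    ∃ Reps : Finset ι, (∀ X, ∃! Y, Y ∈ Reps ∧ r X Y) ∧
      LinearIndependent ℝ (fun Y : Reps => {c | r Y c}.indicator v) ∧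
      Submodule.span ℝ (Set.range fun Y : Reps => {c | r Y c}.indicator v) =
        Module.End.eigenspace M.mulVecLin ρ := by
  obtain ⟨Reps, hReps⟩ := hr.exists_transversal
  have hv' : ∀ i, v i ≠ 0 := fun i => (hv i).ne'
  refine ⟨Reps, hReps, linearIndependent_indicator_of_transversal hr hReps hv', ?_⟩
  apply le_antisymm
  · rw [Submodule.span_le]
    rintro _ ⟨Y, rfl⟩
    refine Module.End.mem_eigenspace_iff.mpr (mulVec_indicator_eq_smul hMv fun c Z hcZ => ?_)
    have hZc : r Z c := (hMr c Z).mp ((hM c Z).lt_of_ne' hcZ)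
    exact ⟨fun h => hr.trans h hZc, fun h => hr.trans h (hr.symm hZc)⟩
  · intro x hx
    have hMx : M *ᵥ x = ρ • x := Module.End.mem_eigenspace_iff.mp hx
    rw [eq_sum_smul_indicator_of_transversal hr hReps hv'
      fun X Y => div_eq_div_of_mulVec_eq_smul hr hM hMr hv hMv hMx]
    exact Submodule.sum_mem _ fun Y hY =>
      Submodule.smul_mem _ _ (Submodule.subset_span ⟨⟨Y, hY⟩, rfl⟩)

end Matrix

open scoped Matrix

namespace FusionRing

section

variable {ι : Type} [Fintype ι] [DecidableEq ι] (R : FusionRing ι)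

lemma star_involutive : Function.Involutive R.star := R.star_invol

lemma N_rotate (a b c : ι) : R.N a b (R.star c) = R.N b c (R.star a) := by
  simpa [R.N_one, eq_comm (a := c), R.star_involutive.eq_iff] using R.assoc a b c R.one

lemma N_star_left (a b c : ι) : R.N a b c = R.N (R.star a) c b := by
  rw [R.N_star, R.N_rotate, R.star_invol]

lemma N_star_right (a b c : ι) : R.N a b c = R.N c (R.star b) a := by
  have h := R.N_rotate c (R.star b) (R.star a)
  rw [R.star_invol] at h
  rw [h, R.N_star]

lemma fp_star (b : ι) : R.fp (R.star b) = R.fp b := by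
  have hmid : ∀ c, ∑ d, (R.N b d c : ℝ) * R.fp d = R.fp (R.star b) * R.fp c := fun c => by
    rw [R.fp_hom]
    exact sum_congr rfl fun d _ => by rw [R.N_star_left b d c]
  have hpos : 0 < ∑ d, R.fp d ^ 2 := sum_pos (fun d _ => pow_pos (R.fp_pos d) 2) ⟨b, mem_univ b⟩
  refine mul_right_cancel₀ hpos.ne' ?_
  calc R.fp (R.star b) * ∑ d, R.fp d ^ 2
      = ∑ c, (∑ d, (R.N b d c : ℝ) * R.fp d) * R.fp c := by
        simp_rw [hmid, mul_sum, sq, mul_assoc]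
    _ = ∑ d, R.fp d * ∑ c, (R.N b d c : ℝ) * R.fp c := by
        simp_rw [sum_mul, mul_sum]
        rw [sum_comm]
        exact sum_congr rfl fun d _ => sum_congr rfl fun c _ => by ring
    _ = R.fp b * ∑ d, R.fp d ^ 2 := by
        simp_rw [← R.fp_hom, mul_sum, sq]
        exact sum_congr rfl fun d _ => by ring

lemma sum_N_mul_fp_mid (D a : ι) : ∑ X, (R.N D X a : ℝ) * R.fp X = R.fp D * R.fp a := by
  rw [← R.fp_star D, R.fp_hom]
  exact sum_congr rfl fun X _ => by rw [R.N_star_left D X a]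

lemma sum_N_mul_fp_left (E c : ι) : ∑ a, (R.N a E c : ℝ) * R.fp a = R.fp E * R.fp c := by
  rw [mul_comm, ← R.fp_star E, R.fp_hom]
  exact sum_congr rfl fun a _ => by rw [R.N_star_right a E c]

def tripleN (D X E Y : ι) : ℕ := ∑ a, R.N D X a * R.N a E Y

lemma tripleN_star (D X E Y : ι) : R.tripleN D X E Y = R.tripleN (R.star D) Y (R.star E) X := by
  rw [tripleN, tripleN, R.assoc (R.star D)]
  exact sum_congr rfl fun a _ => by rw [R.N_star_left D X a, R.N_star_right a E Y, mul_comm]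

lemma tripleN_pos_iff {D X E Y : ι} :
    0 < R.tripleN D X E Y ↔ ∃ a, 0 < R.N D X a ∧ 0 < R.N a E Y := by
  simp [tripleN, sum_pos_iff, CanonicallyOrderedAdd.mul_pos]

lemma exists_N_pos_assoc {a b c d : ι} :
    (∃ x, 0 < R.N a b x ∧ 0 < R.N x c d) ↔ ∃ y, 0 < R.N b c y ∧ 0 < R.N a y d := by
  have h : 0 < ∑ x, R.N a b x * R.N x c d ↔ 0 < ∑ y, R.N b c y * R.N a y d := by rw [R.assoc]
  simpa [sum_pos_iff, CanonicallyOrderedAdd.mul_pos] using h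

noncomputable def leftMulMatrix (u : ι → ℝ) : Matrix ι ι ℝ :=
  Matrix.of fun c X => ∑ D, u D * R.N D X c

noncomputable def rightMulMatrix (w : ι → ℝ) : Matrix ι ι ℝ :=
  Matrix.of fun c X => ∑ E, w E * R.N X E c

noncomputable def sandwichMatrix (S T : Finset ι) : Matrix ι ι ℝ :=
  R.rightMulMatrix (R.reg T) * R.leftMulMatrix (R.reg S)

lemma mul_eq_leftMulMatrix_mulVec (u x : ι → ℝ) : R.mul u x = R.leftMulMatrix u *ᵥ x := by
  ext c
  simp only [mul, leftMulMatrix, Matrix.mulVec, dotProduct, Matrix.of_apply, sum_mul]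
  rw [sum_comm]
  exact sum_congr rfl fun X _ => sum_congr rfl fun D _ => by ring

lemma mul_eq_rightMulMatrix_mulVec (y w : ι → ℝ) : R.mul y w = R.rightMulMatrix w *ᵥ y := by
  ext c
  simp only [mul, rightMulMatrix, Matrix.mulVec, dotProduct, Matrix.of_apply, sum_mul]
  exact sum_congr rfl fun X _ => sum_congr rfl fun E _ => by ring

lemma leftMulMatrix_mulVec_fp (u : ι → ℝ) :
    R.leftMulMatrix u *ᵥ R.fp = (∑ d, u d * R.fp d) • R.fp := by
  ext c
  simp only [leftMulMatrix, Matrix.mulVec, dotProduct, Matrix.of_apply, sum_mul, Pi.smul_apply,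
    smul_eq_mul]
  rw [sum_comm]
  simp_rw [mul_assoc, ← mul_sum, R.sum_N_mul_fp_mid]

lemma rightMulMatrix_mulVec_fp (w : ι → ℝ) :
    R.rightMulMatrix w *ᵥ R.fp = (∑ d, w d * R.fp d) • R.fp := by
  ext c
  simp only [rightMulMatrix, Matrix.mulVec, dotProduct, Matrix.of_apply, sum_mul, Pi.smul_apply,
    smul_eq_mul]
  rw [sum_comm]
  simp_rw [mul_assoc, ← mul_sum, R.sum_N_mul_fp_left]

lemma leftMulMatrix_nonneg {u : ι → ℝ} (hu : ∀ d, 0 ≤ u d) (c X : ι) :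
    0 ≤ R.leftMulMatrix u c X :=
  sum_nonneg fun D _ => mul_nonneg (hu D) (Nat.cast_nonneg _)

lemma rightMulMatrix_nonneg {w : ι → ℝ} (hw : ∀ d, 0 ≤ w d) (c X : ι) :
    0 ≤ R.rightMulMatrix w c X :=
  sum_nonneg fun E _ => mul_nonneg (hw E) (Nat.cast_nonneg _)

lemma reg_nonneg (S : Finset ι) (d : ι) : 0 ≤ R.reg S d := by
  unfold reg
  split_ifs
  exacts [(R.fp_pos d).le, le_rfl]

end

variable {ι : Type} [Fintype ι] [DecidableEq ι] {R : FusionRing ι} {S T : Finset ι}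

lemma sum_reg_mul_fp : ∑ d, R.reg S d * R.fp d = R.fpdimS S := by
  simp [reg, fpdimS, ite_mul, sum_ite_mem, sq]

lemma leftMulMatrix_reg_pos_iff {a X : ι} :
    0 < R.leftMulMatrix (R.reg S) a X ↔ ∃ D ∈ S, 0 < R.N D X a := by
  simp [leftMulMatrix, reg, ite_mul, sum_ite_mem, sum_pos_iff_of_nonneg, R.fp_pos,
    mul_pos_iff_of_pos_left]

lemma rightMulMatrix_reg_pos_iff {c a : ι} :
    0 < R.rightMulMatrix (R.reg T) c a ↔ ∃ E ∈ T, 0 < R.N a E c := by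
  simp [rightMulMatrix, reg, ite_mul, sum_ite_mem, sum_pos_iff_of_nonneg, R.fp_pos,
    mul_pos_iff_of_pos_left]

lemma dcRel_iff_tripleN {X Y : ι} :
    R.dcRel S T X Y ↔ ∃ D ∈ S, ∃ E ∈ T, 0 < R.tripleN D X E Y := Iff.rfl

lemma dcRel_iff {X Y : ι} :
    R.dcRel S T X Y ↔ ∃ D ∈ S, ∃ E ∈ T, ∃ a, 0 < R.N D X a ∧ 0 < R.N a E Y := by
  simp_rw [dcRel_iff_tripleN, tripleN_pos_iff]

lemma dcRel_refl (hS : R.one ∈ S) (hT : R.one ∈ T) (X : ι) : R.dcRel S T X X :=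
  dcRel_iff.mpr ⟨R.one, hS, R.one, hT, X, by simp [R.one_mul], by simp [R.mul_one]⟩

lemma dcRel_symm (hS : ∀ a ∈ S, R.star a ∈ S) (hT : ∀ a ∈ T, R.star a ∈ T) {X Y : ι}
    (h : R.dcRel S T X Y) : R.dcRel S T Y X := by
  obtain ⟨D, hD, E, hE, hDXE⟩ := dcRel_iff_tripleN.mp h
  exact dcRel_iff_tripleN.mpr
    ⟨R.star D, hS D hD, R.star E, hT E hE, R.tripleN_star D X E Y ▸ hDXE⟩

lemma dcRel_trans (hS : ∀ a ∈ S, ∀ b ∈ S, ∀ c, 0 < R.N a b c → c ∈ S)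
    (hT : ∀ a ∈ T, ∀ b ∈ T, ∀ c, 0 < R.N a b c → c ∈ T) {X Y Z : ι}
    (h : R.dcRel S T X Y) (h' : R.dcRel S T Y Z) : R.dcRel S T X Z := by
  obtain ⟨D, hD, E, hE, a, hXa, haY⟩ := dcRel_iff.mp h
  obtain ⟨D', hD', E', hE', b, hYb, hbZ⟩ := dcRel_iff.mp h'
  -- `Z` occurs in `D'·(D·X·E)·E' = (D'·D)·X·(E·E')`; associativity moves a witness each time.
  obtain ⟨u, hau, hub⟩ := R.exists_N_pos_assoc.mpr ⟨Y, haY, hYb⟩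
  obtain ⟨s, hs, hsu⟩ := R.exists_N_pos_assoc.mpr ⟨a, hXa, hau⟩
  obtain ⟨t, ht, htZ⟩ := R.exists_N_pos_assoc.mp ⟨b, hub, hbZ⟩
  exact dcRel_iff.mpr ⟨s, hS D' hD' D hD s hs, t, hT E hE E' hE' t ht, u, hsu, htZ⟩

lemma dcRel_equivalence (hS : R.IsFusionSubset S) (hT : R.IsFusionSubset T) :
    Equivalence (R.dcRel S T) :=
  ⟨dcRel_refl hS.1 hT.1, dcRel_symm hS.2.1 hT.2.1, dcRel_trans hS.2.2 hT.2.2⟩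

lemma mul_mul_reg_eq_sandwichMatrix_mulVec (x : ι → ℝ) :
    R.mul (R.mul (R.reg S) x) (R.reg T) = R.sandwichMatrix S T *ᵥ x := by
  rw [mul_eq_rightMulMatrix_mulVec, mul_eq_leftMulMatrix_mulVec, Matrix.mulVec_mulVec,
    sandwichMatrix]

lemma sandwichMatrix_nonneg (c X : ι) : 0 ≤ R.sandwichMatrix S T c X :=
  sum_nonneg fun a _ => mul_nonneg (R.rightMulMatrix_nonneg (R.reg_nonneg T) c a)
    (R.leftMulMatrix_nonneg (R.reg_nonneg S) a X)

lemma sandwichMatrix_pos_iff {c X : ι} : 0 < R.sandwichMatrix S T c X ↔ R.dcRel S T X c := by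
  rw [sandwichMatrix, Matrix.mul_apply_pos_iff (R.rightMulMatrix_nonneg (R.reg_nonneg T))
    (R.leftMulMatrix_nonneg (R.reg_nonneg S)), dcRel_iff]
  simp only [rightMulMatrix_reg_pos_iff, leftMulMatrix_reg_pos_iff]
  aesop

lemma sandwichMatrix_mulVec_fp :
    R.sandwichMatrix S T *ᵥ R.fp = (R.fpdimS S * R.fpdimS T) • R.fp := by
  rw [sandwichMatrix, ← Matrix.mulVec_mulVec, leftMulMatrix_mulVec_fp, Matrix.mulVec_smul,
    rightMulMatrix_mulVec_fp, smul_smul, sum_reg_mul_fp, sum_reg_mul_fp, mul_comm]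

lemma classVec_eq_indicator (X : ι) :
    R.classVec S T X = {c | R.dcRel S T X c}.indicator R.fp := rfl

end FusionRing

/-- `FPdim(S)·FPdim(T)` is the largest eigenvalue of the operator `x ↦ R_S·x·R_T` on
`R ⊗ ℝ`, and its eigenspace has the family `(A_i)` of double coset sums as a basis. -/
theorem dc_eigenspace_basis {ι : Type} [Fintype ι] [DecidableEq ι] (R : FusionRing ι)
    (S T : Finset ι) (hS : R.IsFusionSubset S) (hT : R.IsFusionSubset T) :
    (∀ (μ : ℝ) (x : ι → ℝ), x ≠ 0 →
        R.mul (R.mul (R.reg S) x) (R.reg T) = μ • x → μ ≤ R.fpdimS S * R.fpdimS T) ∧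
    ∃ Reps : Finset ι,
      (∀ X : ι, ∃! Y, Y ∈ Reps ∧ R.dcRel S T X Y) ∧
      LinearIndependent ℝ (fun Y : Reps => R.classVec S T (Y : ι)) ∧
      (Submodule.span ℝ (Set.range fun Y : Reps => R.classVec S T (Y : ι)) : Set (ι → ℝ)) =
        {x | R.mul (R.mul (R.reg S) x) (R.reg T) = (R.fpdimS S * R.fpdimS T) • x} := by
  simp only [R.mul_mul_reg_eq_sandwichMatrix_mulVec, R.classVec_eq_indicator]
  refine ⟨fun μ x hx hMx => (le_abs_self μ).trans <| Matrix.abs_le_of_mulVec_eq_smul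
    R.sandwichMatrix_nonneg R.fp_pos R.sandwichMatrix_mulVec_fp hx hMx, ?_⟩
  obtain ⟨Reps, hReps, hli, hspan⟩ := Matrix.exists_transversal_span_indicator_eq_eigenspace
    (R.dcRel_equivalence hS hT) R.sandwichMatrix_nonneg (fun _ _ => R.sandwichMatrix_pos_iff)
    R.fp_pos R.sandwichMatrix_mulVec_fp
  refine ⟨Reps, hReps, hli, ?_⟩
  ext x
  simp [hspan]
end

section
/- Let R = ⊕_{g∈G} R_g be a fusion ring faithfully graded by a finite group G (each B_g nonempty), with B_1 the trivial component. Then the map E ↦ H_E = { g ∈ G : E ∩ B_g ≠ ∅ } is an injective map from fusion subsets E of B containing B_1 into subgroups of G, and H_E is indeed a subgroup of G. -/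
open Finset

namespace FusionRing

variable {ι : Type} [Fintype ι] [DecidableEq ι] (R : FusionRing ι)

lemma star_inj : Function.Injective R.star :=
  Function.Involutive.injective R.star_invol

lemma frob (a b c : ι) : R.N a b c = R.N b (R.star c) (R.star a) := by
  have h := R.assoc a b (R.star c) R.one
  simp only [R.N_one, R.mul_one] at h
  have e1 : ∀ x : ι, (R.N a b x * if R.star c = R.star x then (1:ℕ) else 0)
      = if x = c then R.N a b x else 0 := by
    intro x
    by_cases hx : x = c
    · simp [hx]
    · have : R.star c ≠ R.star x := fun hs => hx (R.star_inj hs).symm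
      simp [this, hx]
  have e2 : ∀ x : ι, (R.N b (R.star c) x * if x = R.star a then (1:ℕ) else 0)
      = if x = R.star a then R.N b (R.star c) x else 0 := by
    intro x; by_cases hx : x = R.star a <;> simp [hx]
  rw [Finset.sum_congr rfl (fun x _ => e1 x), Finset.sum_congr rfl (fun x _ => e2 x),
    Finset.sum_ite_eq', Finset.sum_ite_eq'] at h
  simpa using h

lemma frob2 (Y a X : ι) : R.N Y a X = R.N (R.star Y) X a := by
  have h1 : R.N (R.star Y) X a = R.N X (R.star a) Y := by
    rw [R.frob (R.star Y) X a, R.star_invol]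
  have h2 : R.N X (R.star a) Y = R.N a (R.star X) (R.star Y) := by
    rw [R.N_star X (R.star a) Y, R.star_invol]
  rw [h1, h2, ← R.frob]

lemma exists_constituent (a b : ι) : ∃ c, 0 < R.N a b c := by
  by_contra h
  push_neg at h
  have h0 : ∀ c, R.N a b c = 0 := fun c => Nat.le_zero.mp (h c)
  have hh := R.fp_hom a b
  simp only [h0, Nat.cast_zero, zero_mul, Finset.sum_const_zero] at hh
  exact absurd hh (ne_of_gt (mul_pos (R.fp_pos a) (R.fp_pos b)))

end FusionRing

/-- Let `R` be a fusion ring faithfully graded by a finite group `G`, with trivial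
component `B₁ = deg⁻¹(1)`. Then for every fusion subset `E` containing `B₁` the set
`H_E = { g : E ∩ B_g ≠ ∅ }` is a subgroup of `G`, and the assignment `E ↦ H_E` is
injective on fusion subsets containing `B₁`. -/
theorem graded_subset_subgroup_bijection {ι G : Type} [Fintype ι] [DecidableEq ι]
    [Group G] [Finite G]
    (R : FusionRing ι) (deg : ι → G)
    (hdeg_one : deg R.one = 1)
    (hdeg_mul : ∀ a b c, 0 < R.N a b c → deg c = deg a * deg b)
    (hdeg_star : ∀ a, deg (R.star a) = (deg a)⁻¹)
    (hfaithful : ∀ g : G, ∃ X : ι, deg X = g) :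
    (∀ E : Finset ι, R.IsFusionSubset E → (∀ X, deg X = 1 → X ∈ E) →
        ∃ H : Subgroup G, (H : Set G) = { g : G | ∃ X ∈ E, deg X = g }) ∧
    (∀ E E' : Finset ι, R.IsFusionSubset E → R.IsFusionSubset E' →
        (∀ X, deg X = 1 → X ∈ E) → (∀ X, deg X = 1 → X ∈ E') →
        { g : G | ∃ X ∈ E, deg X = g } = { g : G | ∃ X ∈ E', deg X = g } → E = E') := by
  have hexist : ∀ a b : ι, ∃ c, 0 < R.N a b c := R.exists_constituent
  constructor
  · intro E hE hB1
    refine ⟨{ carrier := {g | ∃ X ∈ E, deg X = g}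
              one_mem' := ⟨R.one, hE.1, hdeg_one⟩
              mul_mem' := ?_
              inv_mem' := ?_ }, rfl⟩
    · rintro g h ⟨X, hX, rfl⟩ ⟨Y, hY, rfl⟩
      obtain ⟨c, hc⟩ := hexist X Y
      exact ⟨c, hE.2.2 X hX Y hY c hc, hdeg_mul X Y c hc⟩
    · rintro g ⟨X, hX, rfl⟩
      exact ⟨R.star X, hE.2.1 X hX, hdeg_star X⟩
  · intro E E' hE hE' hB1 hB1' hset
    have key : ∀ (A B : Finset ι), R.IsFusionSubset A → R.IsFusionSubset B →
        (∀ X, deg X = 1 → X ∈ B) →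
        {g : G | ∃ X ∈ A, deg X = g} ⊆ {g : G | ∃ X ∈ B, deg X = g} → A ⊆ B := by
      intro A B hA hB hBone hsub X hX
      obtain ⟨Y, hY, hdY⟩ := hsub ⟨X, hX, rfl⟩
      obtain ⟨a, ha⟩ := hexist (R.star Y) X
      have hdega : deg a = 1 := by
        rw [hdeg_mul _ _ _ ha, hdeg_star, hdY]; group
      have haB : a ∈ B := hBone a hdega
      have h2 : 0 < R.N Y a X := by rw [R.frob2]; exact ha
      exact hB.2.2 Y hY a haB X h2
    exact Finset.Subset.antisymm (key E E' hE hE' hB1' hset.le) (key E' E hE' hE hB1 hset.ge)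
end
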